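/- arXiv:1709.00969 — 2 statements merged into one kernel-verified Lean document; each statement's English description precedes it below -/
import Mathlib

section
/- For every κ > 0 there exists a positive constant C₁ depending only on κ such that for all α > 0 and β > 0 one has ∫_{[0,∞)} x^κ m_{α,β}(dx) ≤ C₁ (1 + α^κ)/β^κ. -/
open MeasureTheory Filter Set
open scoped ENNReal

/-- The modified Bessel function of the first kind of order one,
`I₁(r) = (r/2) Σ_{k=0}^∞ (r²/4)^k / (k!(k+1)!)`. -/
noncomputable def besselI1 (r : ℝ) : ℝ :=
  r / 2 * ∑' k : ℕ, (r ^ 2 / 4) ^ k / ((Nat.factorial k : ℝ) * (Nat.factorial (k + 1) : ℝ))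

/-- The Bessel distribution `m_{α,β}` on `[0,∞)`:
`m_{α,β}(dx) = e^{−α} δ₀(dx) + β e^{−α−βx} √(α/(βx)) I₁(2√(αβx)) dx`. -/
noncomputable def besselMeasure (α β : ℝ) : Measure ℝ :=
  ENNReal.ofReal (Real.exp (-α)) • Measure.dirac (0 : ℝ) +
    MeasureTheory.volume.withDensity fun x =>
      ENNReal.ofReal (Set.indicator (Set.Ioi (0 : ℝ))
        (fun x => β * Real.exp (-α - β * x) * Real.sqrt (α / (β * x)) *
          besselI1 (2 * Real.sqrt (α * β * x))) x)

/-!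
The Bessel distribution is the law of a Poisson(`α`) sum of independent Exp(`β`) variables.
Expanding `I₁` into its series gives its exponential moments,
`∫ e^{tx} dm_{α,β} = exp (α t / (β - t))` for `t < β`. The Chernoff-type bound
`x^κ ≤ (κ/t)^κ e^{-κ} e^{tx}` with `t = κβ/(α+κ)`, the choice making the exponent `α t / (β - t)`
equal to `κ`, then gives `∫ x^κ dm_{α,β} ≤ ((α+κ)/β)^κ ≤ 2^κ (α^κ + κ^κ) / β^κ`.
-/

open Real
open scoped Nat

lemma summable_pow_div_factorial_mul_factorial_succ (y : ℝ) :
    Summable fun k : ℕ => y ^ k / ((k ! : ℝ) * (k + 1)!) := by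
  refine (summable_pow_div_factorial |y|).of_norm_bounded fun k => ?_
  rw [norm_div, norm_pow, norm_mul, Real.norm_eq_abs, RCLike.norm_natCast, RCLike.norm_natCast]
  gcongr
  exact le_mul_of_one_le_right (by positivity) (mod_cast (k + 1).factorial_pos)

lemma besselI1_two_mul_sqrt {y : ℝ} (hy : 0 ≤ y) :
    besselI1 (2 * √y) = √y * ∑' k : ℕ, y ^ k / ((k ! : ℝ) * (k + 1)!) := by
  rw [besselI1, mul_pow, sq_sqrt hy]
  ring_nf

/-- `besselCoeff α β k * x ^ k * e^{-βx}` is the Poisson weight `e^{-α} α^{k+1} / (k+1)!`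
times the Gamma(`k+1`, `β`) density. -/
noncomputable def besselCoeff (α β : ℝ) (k : ℕ) : ℝ :=
  exp (-α) * (α * β) ^ (k + 1) / ((k ! : ℝ) * (k + 1)!)

lemma besselCoeff_nonneg {α β : ℝ} (hα : 0 ≤ α) (hβ : 0 ≤ β) (k : ℕ) :
    0 ≤ besselCoeff α β k := by
  unfold besselCoeff; positivity

lemma hasSum_besselCoeff_mul {α β x : ℝ} (hα : 0 ≤ α) (hβ : 0 < β) (hx : 0 < x) :
    HasSum (fun k => besselCoeff α β k * (x ^ k * exp (-(β * x))))
      (β * exp (-α - β * x) * √(α / (β * x)) * besselI1 (2 * √(α * β * x))) := by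
  have hsqrt : √(α / (β * x)) * √(α * β * x) = α := by
    rw [← sqrt_mul (by positivity), show α / (β * x) * (α * β * x) = α ^ 2 by field_simp,
      sqrt_sq hα]
  have h := (summable_pow_div_factorial_mul_factorial_succ (α * β * x)).hasSum.mul_left
    (exp (-α) * (α * β) * exp (-(β * x)))
  have hterms : (fun k => besselCoeff α β k * (x ^ k * exp (-(β * x)))) =
      fun k => exp (-α) * (α * β) * exp (-(β * x)) *
        ((α * β * x) ^ k / ((k ! : ℝ) * (k + 1)!)) := by
    funext k
    simp only [besselCoeff]
    ring
  have hvalue : β * exp (-α - β * x) * √(α / (β * x)) * besselI1 (2 * √(α * β * x)) =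
      exp (-α) * (α * β) * exp (-(β * x)) *
        ∑' k : ℕ, (α * β * x) ^ k / ((k ! : ℝ) * (k + 1)!) := by
    rw [besselI1_two_mul_sqrt (by positivity), sub_eq_add_neg, exp_add]
    linear_combination (β * exp (-α) * exp (-(β * x)) *
      ∑' k : ℕ, (α * β * x) ^ k / ((k ! : ℝ) * (k + 1)!)) * hsqrt
  rw [hterms, hvalue]
  exact h

lemma besselMeasure_density_eq_indicator_tsum {α β : ℝ} (hα : 0 ≤ α) (hβ : 0 < β) :
    (fun x => ENNReal.ofReal (Set.indicator (Set.Ioi (0 : ℝ))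
        (fun x => β * exp (-α - β * x) * √(α / (β * x)) * besselI1 (2 * √(α * β * x))) x)) =
      (Ioi 0).indicator fun x =>
        ∑' k, ENNReal.ofReal (besselCoeff α β k) * ENNReal.ofReal (x ^ k * exp (-(β * x))) := by
  funext x
  by_cases hx : x ∈ Ioi 0
  · have hx' : 0 < x := hx
    rw [indicator_of_mem hx, indicator_of_mem hx, ← (hasSum_besselCoeff_mul hα hβ hx').tsum_eq,
      ENNReal.ofReal_tsum_of_nonneg (fun k => by have := besselCoeff_nonneg hα hβ.le k; positivity)
        (hasSum_besselCoeff_mul hα hβ hx').summable]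
    exact tsum_congr fun k => ENNReal.ofReal_mul (besselCoeff_nonneg hα hβ.le k)
  · rw [indicator_of_notMem hx, indicator_of_notMem hx, ENNReal.ofReal_zero]

lemma lintegral_besselMeasure {α β : ℝ} (hα : 0 ≤ α) (hβ : 0 < β) {f : ℝ → ℝ≥0∞}
    (hf : Measurable f) :
    ∫⁻ x, f x ∂besselMeasure α β = ENNReal.ofReal (exp (-α)) * f 0 +
      ∑' k, ENNReal.ofReal (besselCoeff α β k) *
        ∫⁻ x in Ioi 0, ENNReal.ofReal (x ^ k * exp (-(β * x))) * f x := by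
  have hterm (k : ℕ) : Measurable fun x : ℝ => ENNReal.ofReal (x ^ k * exp (-(β * x))) :=
    ENNReal.measurable_ofReal.comp (by fun_prop)
  rw [besselMeasure, lintegral_add_measure, lintegral_smul_measure, lintegral_dirac,
    besselMeasure_density_eq_indicator_tsum hα hβ, withDensity_indicator measurableSet_Ioi,
    lintegral_withDensity_eq_lintegral_mul _ (Measurable.tsum fun k =>
      (hterm k).const_mul _) hf, smul_eq_mul]
  simp only [Pi.mul_apply, ← ENNReal.tsum_mul_right, mul_assoc]
  rw [lintegral_tsum fun k => by have := hterm k; fun_prop]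
  congr 1
  exact tsum_congr fun k => lintegral_const_mul _ ((hterm k).mul hf)

lemma lintegral_pow_mul_exp_neg_mul_Ioi (k : ℕ) {c : ℝ} (hc : 0 < c) :
    ∫⁻ x in Ioi 0, ENNReal.ofReal (x ^ k * exp (-(c * x))) =
      ENNReal.ofReal (k ! / c ^ (k + 1)) := by
  have hgamma := integral_rpow_mul_exp_neg_mul_Ioi (by positivity : (0 : ℝ) < k + 1) hc
  simp only [add_sub_cancel_right, rpow_natCast] at hgamma
  rw [← ofReal_integral_eq_lintegral_ofReal
    (.of_integral_ne_zero (by rw [hgamma]; positivity)), hgamma]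
  · simp_rw [Gamma_nat_eq_factorial, div_eq_mul_inv, one_mul, mul_comm, inv_rpow hc.le,
      ← rpow_natCast]
    norm_cast
  · filter_upwards [ae_restrict_mem measurableSet_Ioi] with x hx
    exact mul_nonneg (pow_nonneg (le_of_lt hx) _) (exp_nonneg _)

lemma hasSum_exp_neg_mul_pow_div_factorial (a y : ℝ) :
    HasSum (fun n => exp (-a) * y ^ n / n !) (exp (y - a)) := by
  have h := (NormedSpace.expSeries_div_hasSum_exp y).mul_left (exp (-a))
  rw [← Real.exp_eq_exp_ℝ, ← exp_add, neg_add_eq_sub] at h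
  simpa only [mul_div_assoc] using h

lemma lintegral_exp_mul_besselMeasure {α β t : ℝ} (hα : 0 ≤ α) (hβ : 0 < β) (ht : t < β) :
    ∫⁻ x, ENNReal.ofReal (exp (t * x)) ∂besselMeasure α β =
      ENNReal.ofReal (exp (α * t / (β - t))) := by
  have hc : 0 < β - t := sub_pos.2 ht
  set y := α * β / (β - t)
  have hy : 0 ≤ y := div_nonneg (mul_nonneg hα hβ.le) hc.le
  have hseries := hasSum_exp_neg_mul_pow_div_factorial α y
  have hterm (k : ℕ) : ENNReal.ofReal (besselCoeff α β k) *
      ∫⁻ x in Ioi 0, ENNReal.ofReal (x ^ k * exp (-(β * x))) * ENNReal.ofReal (exp (t * x)) =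
        ENNReal.ofReal (exp (-α) * y ^ (k + 1) / (k + 1)!) := by
    have hmerge : EqOn (fun x => ENNReal.ofReal (x ^ k * exp (-(β * x))) *
        ENNReal.ofReal (exp (t * x))) (fun x => ENNReal.ofReal (x ^ k * exp (-((β - t) * x))))
        (Ioi 0) := fun x hx => by
      dsimp only
      rw [← ENNReal.ofReal_mul (mul_nonneg (pow_nonneg (le_of_lt hx) _) (exp_nonneg _)),
        mul_assoc, ← exp_add]
      ring_nf
    rw [setLIntegral_congr_fun measurableSet_Ioi hmerge, lintegral_pow_mul_exp_neg_mul_Ioi k hc,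
      ← ENNReal.ofReal_mul (besselCoeff_nonneg hα hβ.le k)]
    congr 1
    simp only [besselCoeff, y, div_pow, mul_pow]
    field_simp
  rw [lintegral_besselMeasure hα hβ (by fun_prop), tsum_congr hterm, mul_zero, exp_zero,
    ENNReal.ofReal_one, mul_one]
  calc ENNReal.ofReal (exp (-α)) + ∑' k, ENNReal.ofReal (exp (-α) * y ^ (k + 1) / (k + 1)!)
      = ∑' n, ENNReal.ofReal (exp (-α) * y ^ n / n !) := by
        conv_rhs => rw [tsum_eq_zero_add' ENNReal.summable]
        simp only [pow_zero, mul_one, Nat.factorial_zero, Nat.cast_one, div_one]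
    _ = ENNReal.ofReal (exp (α * t / (β - t))) := by
        rw [← ENNReal.ofReal_tsum_of_nonneg (fun n => by positivity) hseries.summable,
          hseries.tsum_eq]
        congr 2
        simp only [y]
        field_simp
        ring

lemma ae_nonneg_besselMeasure {α β : ℝ} (hα : 0 ≤ α) (hβ : 0 < β) :
    ∀ᵐ x ∂besselMeasure α β, 0 ≤ x := by
  have hneg : {x : ℝ | ¬0 ≤ x} = Iio 0 := by ext; simp
  rw [ae_iff, hneg, ← lintegral_indicator_one measurableSet_Iio,
    lintegral_besselMeasure hα hβ (measurable_one.indicator measurableSet_Iio),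
    indicator_of_notMem self_notMem_Iio, mul_zero, zero_add, ENNReal.tsum_eq_zero]
  intro k
  have hvanish : EqOn (fun x => ENNReal.ofReal (x ^ k * exp (-(β * x))) * (Iio 0).indicator 1 x)
      0 (Ioi 0) := fun x hx => by
    have hx' : x ∉ Iio 0 := not_lt.2 (mem_Ioi.1 hx).le
    simp only [Pi.zero_apply, indicator_of_notMem hx', mul_zero]
  rw [setLIntegral_congr_fun measurableSet_Ioi hvanish, Pi.zero_def, lintegral_zero, mul_zero]

lemma rpow_le_mul_exp_mul {κ t x : ℝ} (hκ : 0 < κ) (ht : 0 < t) (hx : 0 ≤ x) :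
    x ^ κ ≤ (κ / t) ^ κ * exp (-κ) * exp (t * x) := by
  set s := t * x / κ
  have hs : 0 ≤ s := by positivity
  have hxs : x = κ / t * s := by simp only [s]; field_simp
  calc x ^ κ = (κ / t) ^ κ * s ^ κ := by rw [hxs, mul_rpow (by positivity) hs]
    _ ≤ (κ / t) ^ κ * exp (s - 1) ^ κ := by
        gcongr
        linarith [add_one_le_exp (s - 1)]
    _ = (κ / t) ^ κ * exp (-κ) * exp (t * x) := by
        rw [← exp_mul, mul_assoc, ← exp_add]
        congr 2
        simp only [s]
        field_simp
        ring

lemma lintegral_rpow_le_mul_lintegral_exp_mul {μ : Measure ℝ} (hμ : ∀ᵐ x ∂μ, 0 ≤ x)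
    {κ t : ℝ} (hκ : 0 < κ) (ht : 0 < t) :
    ∫⁻ x, ENNReal.ofReal (x ^ κ) ∂μ ≤
      ENNReal.ofReal ((κ / t) ^ κ * exp (-κ)) * ∫⁻ x, ENNReal.ofReal (exp (t * x)) ∂μ := by
  rw [← lintegral_const_mul _ (by fun_prop)]
  refine lintegral_mono_ae (hμ.mono fun x hx => ?_)
  rw [← ENNReal.ofReal_mul (by positivity)]
  exact ENNReal.ofReal_le_ofReal (rpow_le_mul_exp_mul hκ ht hx)

lemma lintegral_rpow_besselMeasure_le {α β κ : ℝ} (hα : 0 < α) (hβ : 0 < β) (hκ : 0 < κ) :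
    ∫⁻ x, ENNReal.ofReal (x ^ κ) ∂besselMeasure α β ≤ ENNReal.ofReal (((α + κ) / β) ^ κ) := by
  set t := κ * β / (α + κ)
  have ht : 0 < t := by positivity
  have htβ : t < β := by
    rw [div_lt_iff₀ (by positivity)]
    nlinarith
  have htακ : t * (α + κ) = κ * β := div_mul_cancel₀ _ (by positivity)
  have hκt : κ / t = (α + κ) / β := by
    rw [div_eq_div_iff ht.ne' hβ.ne']
    linarith
  have hexponent : α * t / (β - t) = κ := by
    rw [div_eq_iff (sub_pos.2 htβ).ne']
    linarith
  calc ∫⁻ x, ENNReal.ofReal (x ^ κ) ∂besselMeasure α β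
      ≤ ENNReal.ofReal ((κ / t) ^ κ * exp (-κ)) *
          ∫⁻ x, ENNReal.ofReal (exp (t * x)) ∂besselMeasure α β :=
        lintegral_rpow_le_mul_lintegral_exp_mul (ae_nonneg_besselMeasure hα.le hβ) hκ ht
    _ = ENNReal.ofReal (((α + κ) / β) ^ κ) := by
        rw [lintegral_exp_mul_besselMeasure hα.le hβ htβ, ← ENNReal.ofReal_mul (by positivity),
          mul_assoc, ← exp_add, hκt, hexponent, neg_add_cancel, exp_zero, mul_one]

lemma Real.add_rpow_le_two_rpow_mul_rpow_add_rpow {a b p : ℝ} (ha : 0 ≤ a) (hb : 0 ≤ b)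
    (hp : 0 ≤ p) : (a + b) ^ p ≤ 2 ^ p * (a ^ p + b ^ p) :=
  calc (a + b) ^ p ≤ (2 * max a b) ^ p := by
        gcongr
        linarith [le_max_left a b, le_max_right a b]
    _ = 2 ^ p * max (a ^ p) (b ^ p) := by
        rw [mul_rpow zero_le_two (le_max_of_le_left ha), rpow_max ha hb hp]
    _ ≤ 2 ^ p * (a ^ p + b ^ p) := by
        gcongr
        exact max_le_add_of_nonneg (by positivity) (by positivity)

theorem bessel_moment_upper_bound (κ : ℝ) (hκ : 0 < κ) :
    ∃ C₁ : ℝ, 0 < C₁ ∧ ∀ α β : ℝ, 0 < α → 0 < β →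
      (∫⁻ x, ENNReal.ofReal (x ^ κ) ∂ besselMeasure α β) ≤
        ENNReal.ofReal (C₁ * (1 + α ^ κ) / β ^ κ) := by
  refine ⟨2 ^ κ * (1 + κ ^ κ), by positivity, fun α β hα hβ =>
    (lintegral_rpow_besselMeasure_le hα hβ hκ).trans (ENNReal.ofReal_le_ofReal ?_)⟩
  rw [div_rpow (by positivity) hβ.le]
  gcongr
  calc (α + κ) ^ κ ≤ 2 ^ κ * (α ^ κ + κ ^ κ) :=
        Real.add_rpow_le_two_rpow_mul_rpow_add_rpow hα.le hκ.le hκ.le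
    _ ≤ 2 ^ κ * (1 + κ ^ κ) * (1 + α ^ κ) := by
        rw [mul_assoc]
        gcongr
        nlinarith [mul_nonneg (rpow_nonneg hα.le κ) (rpow_nonneg hκ.le κ)]
end

section
/- Let 0 < κ < 1, a ≥ 0, b > 0, σ > 0, and let ν be a measure on (0,∞) with ∫_0^∞ (z∧1) ν(dz) < ∞ and ∫_{(1,∞)} z^κ ν(dz) < ∞. Then there exists a constant M > 0 such that for all x ≥ 1, (a − bx)·κ x^{κ−1} + (σ² x/2)·κ(κ−1) x^{κ−2} + ∫_0^∞ ((x+z)^κ − x^κ) ν(dz) ≤ −bκ x^κ + M. -/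
open MeasureTheory Filter Set
open scoped ENNReal

-- Lipschitz bound: t ↦ t^κ is 1-Lipschitz on [1, ∞) for 0 < κ < 1
lemma rpow_lip {κ : ℝ} (hκ0 : 0 < κ) (hκ1 : κ < 1) {s t : ℝ} (hs : 1 ≤ s) (hst : s ≤ t) :
    t ^ κ - s ^ κ ≤ t - s := by
  have hanti : AntitoneOn (fun u : ℝ => u ^ κ - u) (Set.Ici 1) := by
    apply antitoneOn_of_deriv_nonpos (convex_Ici 1)
    · apply ContinuousOn.sub _ continuousOn_id
      intro u hu
      exact (Real.continuousAt_rpow_const u κ (Or.inr hκ0.le)).continuousWithinAt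
    · intro u hu
      rw [interior_Ici] at hu
      have h1 : (0:ℝ) < u := lt_trans one_pos hu
      exact ((Real.hasDerivAt_rpow_const (Or.inl h1.ne')).sub (hasDerivAt_id u)).differentiableAt.differentiableWithinAt
    · intro u hu
      rw [interior_Ici] at hu
      have h1 : (0:ℝ) < u := lt_trans one_pos hu
      have hd : deriv (fun u : ℝ => u ^ κ - u) u = κ * u ^ (κ - 1) - 1 :=
        ((Real.hasDerivAt_rpow_const (Or.inl h1.ne')).sub (hasDerivAt_id u)).deriv
      rw [hd]
      have hle : u ^ (κ - 1) ≤ 1 :=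
        Real.rpow_le_one_of_one_le_of_nonpos hu.le (by linarith)
      nlinarith [Real.rpow_nonneg h1.le (κ - 1)]
  have h2 := hanti (Set.mem_Ici.2 hs) (Set.mem_Ici.2 (hs.trans hst)) hst
  simp only at h2
  linarith

lemma rpow_subadd {κ x z : ℝ} (hκ0 : 0 ≤ κ) (hκ1 : κ ≤ 1) (hx : 0 ≤ x) (hz : 0 ≤ z) :
    (x + z) ^ κ ≤ x ^ κ + z ^ κ := by
  have h := NNReal.rpow_add_le_add_rpow x.toNNReal z.toNNReal hκ0 hκ1
  have h' := NNReal.coe_le_coe.2 h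
  push_cast at h'
  rwa [Real.coe_toNNReal x hx, Real.coe_toNNReal z hz] at h'

theorem generator_powV_drift (κ a b σ : ℝ) (hκ0 : 0 < κ) (hκ1 : κ < 1)
    (ha : 0 ≤ a) (hb : 0 < b) (hσ : 0 < σ)
    (ν : Measure ℝ) (hνsupp : ν (Set.Iic 0) = 0)
    (hν : ∫⁻ z in Set.Ioi (0 : ℝ), ENNReal.ofReal (min z 1) ∂ν < ⊤)
    (hνκ : ∫⁻ z in Set.Ioi (1 : ℝ), ENNReal.ofReal (z ^ κ) ∂ν < ⊤) :
    ∃ M : ℝ, 0 < M ∧ ∀ x : ℝ, 1 ≤ x →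
      (a - b * x) * (κ * x ^ (κ - 1)) + σ ^ 2 * x / 2 * (κ * (κ - 1) * x ^ (κ - 2)) +
          (∫ z in Set.Ioi (0 : ℝ), ((x + z) ^ κ - x ^ κ) ∂ν) ≤
        -(b * κ) * x ^ κ + M := by
  set C1 : ℝ := (∫⁻ z in Set.Ioi (0 : ℝ), ENNReal.ofReal (min z 1) ∂ν).toReal with hC1
  set C2 : ℝ := (∫⁻ z in Set.Ioi (1 : ℝ), ENNReal.ofReal (z ^ κ) ∂ν).toReal with hC2
  have hC1n : 0 ≤ C1 := ENNReal.toReal_nonneg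
  have hC2n : 0 ≤ C2 := ENNReal.toReal_nonneg
  refine ⟨a * κ + C1 + C2 + 1, by positivity, fun x hx => ?_⟩
  have hx0 : (0:ℝ) < x := lt_of_lt_of_le one_pos hx
  -- drift term
  have hxx : x * x ^ (κ - 1) = x ^ κ := by
    have h := Real.rpow_add hx0 1 (κ - 1)
    rw [Real.rpow_one, show (1:ℝ) + (κ - 1) = κ by ring] at h
    linarith
  have hx1 : x ^ (κ - 1) ≤ 1 := Real.rpow_le_one_of_one_le_of_nonpos hx (by linarith)
  have hdrift : (a - b * x) * (κ * x ^ (κ - 1)) ≤ a * κ - b * κ * x ^ κ := by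
    have h1 : a * (κ * x ^ (κ - 1)) ≤ a * κ := by
      have := mul_le_of_le_one_right hκ0.le hx1
      nlinarith
    have h2 : (b * x) * (κ * x ^ (κ - 1)) = b * κ * x ^ κ := by
      rw [← hxx]; ring
    nlinarith [h1, h2]
  -- diffusion term
  have hdiff : σ ^ 2 * x / 2 * (κ * (κ - 1) * x ^ (κ - 2)) ≤ 0 := by
    have h1 : 0 ≤ σ ^ 2 * x / 2 := by positivity
    have h2 : κ * (κ - 1) * x ^ (κ - 2) ≤ 0 := by
      have h4 : 0 ≤ κ * x ^ (κ - 2) := mul_nonneg hκ0.le (Real.rpow_nonneg hx0.le (κ - 2))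
      nlinarith [mul_nonneg h4 (show (0:ℝ) ≤ 1 - κ by linarith)]
    exact mul_nonpos_of_nonneg_of_nonpos h1 h2
  -- jump term
  have hjump : (∫ z in Set.Ioi (0 : ℝ), ((x + z) ^ κ - x ^ κ) ∂ν) ≤ C1 + C2 := by
    have hmeas : AEMeasurable (fun z : ℝ => (x + z) ^ κ - x ^ κ) (ν.restrict (Set.Ioi 0)) := by
      exact (((Real.continuous_rpow_const hκ0.le).comp (continuous_const.add continuous_id)).sub
        continuous_const).measurable.aemeasurable
    have hnn : 0 ≤ᵐ[ν.restrict (Set.Ioi 0)] fun z => (x + z) ^ κ - x ^ κ := by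
      filter_upwards [ae_restrict_mem measurableSet_Ioi] with z hz
      have : x ^ κ ≤ (x + z) ^ κ :=
        Real.rpow_le_rpow hx0.le (by linarith [Set.mem_Ioi.1 hz]) hκ0.le
      simpa using this
    rw [integral_eq_lintegral_of_nonneg_ae hnn hmeas.aestronglyMeasurable]
    have hbound : (∫⁻ z in Set.Ioi (0:ℝ), ENNReal.ofReal ((x + z) ^ κ - x ^ κ) ∂ν) ≤
        (∫⁻ z in Set.Ioi (0:ℝ), (ENNReal.ofReal (min z 1) +
          (Set.Ioi (1:ℝ)).indicator (fun z => ENNReal.ofReal (z ^ κ)) z) ∂ν) := by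
      apply setLIntegral_mono' measurableSet_Ioi
      intro z hz
      have hz0 : (0:ℝ) < z := Set.mem_Ioi.1 hz
      by_cases hz1 : z ≤ 1
      · have hlip : (x + z) ^ κ - x ^ κ ≤ z := by
          have := rpow_lip hκ0 hκ1 hx (by linarith : x ≤ x + z)
          linarith
        calc ENNReal.ofReal ((x + z) ^ κ - x ^ κ) ≤ ENNReal.ofReal (min z 1) := by
              rw [min_eq_left hz1]; exact ENNReal.ofReal_le_ofReal hlip
          _ ≤ _ := le_add_right le_rfl
      · push_neg at hz1
        have hsub : (x + z) ^ κ - x ^ κ ≤ z ^ κ := by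
          have := rpow_subadd hκ0.le hκ1.le hx0.le hz0.le
          linarith
        have hind : (Set.Ioi (1:ℝ)).indicator (fun z => ENNReal.ofReal (z ^ κ)) z
            = ENNReal.ofReal (z ^ κ) := Set.indicator_of_mem (Set.mem_Ioi.2 hz1) _
        calc ENNReal.ofReal ((x + z) ^ κ - x ^ κ) ≤ ENNReal.ofReal (z ^ κ) :=
              ENNReal.ofReal_le_ofReal hsub
          _ ≤ _ := by rw [hind]; exact le_add_left le_rfl
    have hsplit : (∫⁻ z in Set.Ioi (0:ℝ), (ENNReal.ofReal (min z 1) +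
          (Set.Ioi (1:ℝ)).indicator (fun z => ENNReal.ofReal (z ^ κ)) z) ∂ν)
        = (∫⁻ z in Set.Ioi (0:ℝ), ENNReal.ofReal (min z 1) ∂ν)
          + (∫⁻ z in Set.Ioi (1:ℝ), ENNReal.ofReal (z ^ κ) ∂ν) := by
      rw [lintegral_add_left (by fun_prop : Measurable fun z : ℝ => ENNReal.ofReal (min z 1))]
      congr 1
      rw [lintegral_indicator measurableSet_Ioi, Measure.restrict_restrict measurableSet_Ioi,
        Set.inter_eq_self_of_subset_left (Set.Ioi_subset_Ioi zero_le_one)]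
    have hfin : (∫⁻ z in Set.Ioi (0:ℝ), ENNReal.ofReal (min z 1) ∂ν)
          + (∫⁻ z in Set.Ioi (1:ℝ), ENNReal.ofReal (z ^ κ) ∂ν) ≠ ⊤ :=
      (ENNReal.add_lt_top.2 ⟨hν, hνκ⟩).ne
    calc (∫⁻ z in Set.Ioi (0:ℝ), ENNReal.ofReal ((x + z) ^ κ - x ^ κ) ∂ν).toReal
        ≤ ((∫⁻ z in Set.Ioi (0:ℝ), ENNReal.ofReal (min z 1) ∂ν)
          + (∫⁻ z in Set.Ioi (1:ℝ), ENNReal.ofReal (z ^ κ) ∂ν)).toReal := by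
          apply ENNReal.toReal_mono hfin
          rw [← hsplit]; exact hbound
      _ = C1 + C2 := ENNReal.toReal_add hν.ne hνκ.ne
  linarith
end
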